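/- arXiv:math/0311318 — 3 statements merged into one kernel-verified Lean document; each statement's English description precedes it below -/
import Mathlib

section
/- Let d ≥ 1 and let m ∈ ℤ^d be nonzero. Let f : ℤ^d → ℚ be the indicator function of the set {k·m : k ∈ ℤ}. Then (1 − e^m) ⋆ f = 0; moreover, for EVERY D ∈ ℚ[ℤ^d] such that D ⋆ f is finitely supported, one has D ⋆ f = 0. In particular f is summable and its sum S(f) is 0 in the fraction field of ℚ[ℤ^d]. (This is the paper's Lemma 9.1: S(Σ_{k=-∞}^{∞} e^{km}) = 0.) -/
/-!
The indicator `f` of `ℤ • m` is `m`-periodic, hence so is every convolution `D ⋆ f`. Since `m` has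
infinite order, `k ↦ x + k • m` is injective, so an `m`-periodic function that is nonzero at some `x`
has infinite support; a finitely supported `D ⋆ f` therefore vanishes, and the sum is `0 / D = 0`.
-/

/-- The convolution `D ⋆ f` of an element `D` of the group algebra `ℚ[ℤ^d]`
with a function `f : ℤ^d → ℚ`: `(D ⋆ f)(x) = Σ_{m ∈ support D} D(m) · f(x - m)`. -/
noncomputable def conv {d : ℕ} (D : AddMonoidAlgebra ℚ (Fin d → ℤ)) (f : (Fin d → ℤ) → ℚ) :
    (Fin d → ℤ) → ℚ :=
  fun x => ∑ m ∈ D.coeff.support, D.coeff m * f (x - m)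

/-- `e^m`, the basis element of the group algebra `ℚ[ℤ^d]` corresponding to `m ∈ ℤ^d`. -/
noncomputable def expn {d : ℕ} (m : Fin d → ℤ) : AddMonoidAlgebra ℚ (Fin d → ℤ) :=
  AddMonoidAlgebra.single m 1

open Function

theorem AddSubgroup.periodic_indicator_one {G M : Type*} [AddGroup G] [Zero M] [One M]
    (H : AddSubgroup G) {m : G} (hm : m ∈ H) : Periodic ((H : Set G).indicator (1 : G → M)) m :=
  fun x => by
    classical
    rw [Set.indicator_apply, Set.indicator_apply, SetLike.mem_coe, SetLike.mem_coe,
      H.add_mem_cancel_right hm]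
    rfl

theorem Function.Periodic.eq_zero_of_finite_support {G M : Type*} [AddGroup G] [Zero M]
    {g : G → M} {m : G} (hg : Periodic g m) (hm : ¬IsOfFinAddOrder m) (hfin : (support g).Finite) :
    g = 0 := by
  funext x
  by_contra hx
  have hinj : Injective fun k : ℤ => x + k • m :=
    (add_right_injective x).comp (injective_zsmul_iff_not_isOfFinAddOrder.mpr hm)
  refine Set.infinite_range_of_injective hinj (hfin.subset ?_)
  rintro _ ⟨k, rfl⟩
  exact (hg.zsmul k x).trans_ne hx

section conv

variable {d : ℕ}

theorem conv_sub (D E : AddMonoidAlgebra ℚ (Fin d → ℤ)) (f : (Fin d → ℤ) → ℚ) :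
    conv (D - E) f = conv D f - conv E f := by
  funext x
  exact Finsupp.sum_sub_index (h := fun n c => c * f (x - n)) fun _ _ _ => sub_mul _ _ _

theorem conv_single (n : Fin d → ℤ) (c : ℚ) (f : (Fin d → ℤ) → ℚ) (x : Fin d → ℤ) :
    conv (AddMonoidAlgebra.single n c) f x = c * f (x - n) := by
  by_cases hc : c = 0
  · simp [conv, hc]
  · simp [conv, AddMonoidAlgebra.coeff_single, Finsupp.support_single _ hc]

theorem Function.Periodic.conv {f : (Fin d → ℤ) → ℚ} {m : Fin d → ℤ} (hf : Periodic f m)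
    (D : AddMonoidAlgebra ℚ (Fin d → ℤ)) : Periodic (conv D f) m := fun x =>
  Finset.sum_congr rfl fun n _ => by rw [add_sub_right_comm, hf]

theorem conv_one_sub_expn {f : (Fin d → ℤ) → ℚ} {m : Fin d → ℤ} (hf : Periodic f m) :
    conv (1 - expn m) f = 0 := by
  funext x
  rw [conv_sub, Pi.sub_apply, AddMonoidAlgebra.one_def, expn, conv_single, conv_single,
    sub_zero, ← hf (x - m), sub_add_cancel]
  simp

end conv

theorem sum_two_sided_series_eq_zero_general {d : ℕ} (m : Fin d → ℤ) (hm : m ≠ 0)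
    (f : (Fin d → ℤ) → ℚ) (hf : f = Set.indicator {x : Fin d → ℤ | ∃ k : ℤ, x = k • m} 1) :
    conv (1 - expn m) f = 0 ∧
      (∀ D : AddMonoidAlgebra ℚ (Fin d → ℤ),
        (Function.support (conv D f)).Finite → conv D f = 0) ∧
      (∀ D P : AddMonoidAlgebra ℚ (Fin d → ℤ), D ≠ 0 → (∀ x, P.coeff x = conv D f x) →
        (algebraMap (AddMonoidAlgebra ℚ (Fin d → ℤ))
              (FractionRing (AddMonoidAlgebra ℚ (Fin d → ℤ))) P) /
            (algebraMap (AddMonoidAlgebra ℚ (Fin d → ℤ))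
              (FractionRing (AddMonoidAlgebra ℚ (Fin d → ℤ))) D) = 0) := by
  have hper : Periodic f m := by
    have hset : {x : Fin d → ℤ | ∃ k : ℤ, x = k • m} = AddSubgroup.zmultiples m := by
      ext; simp [AddSubgroup.mem_zmultiples_iff, eq_comm]
    rw [hf, hset]
    exact (AddSubgroup.zmultiples m).periodic_indicator_one (AddSubgroup.mem_zmultiples m)
  have hvanish (D : AddMonoidAlgebra ℚ (Fin d → ℤ)) (hfin : (support (conv D f)).Finite) :
      conv D f = 0 :=
    (hper.conv D).eq_zero_of_finite_support (not_isOfFinAddOrder_of_isAddTorsionFree hm) hfin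
  refine ⟨conv_one_sub_expn hper, hvanish, fun D P _ hP => ?_⟩
  have hPD : P.coeff = conv D f := funext hP
  have hP0 : P = 0 := by
    ext x
    rw [hP, hvanish D (hPD ▸ P.coeff.hasFiniteSupport)]
    rfl
  rw [hP0, map_zero, zero_div]

/-- Lemma 9.1: for nonzero `m ∈ ℤ^d`, the indicator function `f` of `{k·m : k ∈ ℤ}`
(the "two-sided geometric series" `Σ_{k=-∞}^{∞} e^{km}`) satisfies `(1 - e^m) ⋆ f = 0`;
moreover `D ⋆ f = 0` for every `D` making `D ⋆ f` finitely supported, so `f` is summable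
with sum `S(f) = 0` in the fraction field of `ℚ[ℤ^d]`. -/
theorem sum_two_sided_series_eq_zero {d : ℕ} (hd : 1 ≤ d) (m : Fin d → ℤ) (hm : m ≠ 0)
    (f : (Fin d → ℤ) → ℚ) (hf : f = Set.indicator {x : Fin d → ℤ | ∃ k : ℤ, x = k • m} 1) :
    conv (1 - expn m) f = 0 ∧
      (∀ D : AddMonoidAlgebra ℚ (Fin d → ℤ),
        (Function.support (conv D f)).Finite → conv D f = 0) ∧
      (∀ D P : AddMonoidAlgebra ℚ (Fin d → ℤ), D ≠ 0 → (∀ x, P.coeff x = conv D f x) →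
        (algebraMap (AddMonoidAlgebra ℚ (Fin d → ℤ))
              (FractionRing (AddMonoidAlgebra ℚ (Fin d → ℤ))) P) /
            (algebraMap (AddMonoidAlgebra ℚ (Fin d → ℤ))
              (FractionRing (AddMonoidAlgebra ℚ (Fin d → ℤ))) D) = 0) :=
  sum_two_sided_series_eq_zero_general m hm f hf
end

section
/- Let d ≥ 1, let f : ℤ^d → ℚ, and let D, D' ∈ ℚ[ℤ^d] be such that P := D ⋆ f and P' := D' ⋆ f are both finitely supported (hence are elements of ℚ[ℤ^d]). Then P · D' = P' · D in ℚ[ℤ^d]. Consequently, if moreover D ≠ 0 and D' ≠ 0, then P/D = P'/D' in the fraction field of ℚ[ℤ^d]; i.e., the Brion–Vergne sum S(f) of a summable function f is well defined, independent of the chosen denominator. -/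
/-!
Convolution makes the functions `ℤ^d → ℚ` a module over the commutative ring `ℚ[ℤ^d]`, and on
finitely supported functions it is multiplication in `ℚ[ℤ^d]`. Hence `P · D' = D' ⋆ (D ⋆ f)` and
`P' · D = D ⋆ (D' ⋆ f)`, which agree because convolutions commute.
-/

lemma coeff_mul_eq_conv {d : ℕ} (Q E : AddMonoidAlgebra ℚ (Fin d → ℤ)) :
    ⇑(Q * E).coeff = conv E Q.coeff := by
  ext x
  simp only [AddMonoidAlgebra.coeff_mul_apply_right, Finsupp.sum, conv, mul_comm, sub_eq_add_neg]

lemma conv_comm {d : ℕ} (D E : AddMonoidAlgebra ℚ (Fin d → ℤ)) (f : (Fin d → ℤ) → ℚ) :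
    conv D (conv E f) = conv E (conv D f) := by
  ext x
  simp only [conv, Finset.mul_sum]
  rw [Finset.sum_comm]
  refine Finset.sum_congr rfl fun m _ => Finset.sum_congr rfl fun n _ => ?_
  rw [sub_right_comm]
  ring

lemma IsFractionRing.div_eq_div_of_mul_eq_mul {R K : Type*} [CommRing R] [Field K] [Algebra R K]
    [IsFractionRing R K] {a b c e : R} (hb : b ≠ 0) (he : e ≠ 0) (h : a * e = c * b) :
    algebraMap R K a / algebraMap R K b = algebraMap R K c / algebraMap R K e := by
  rw [div_eq_div_iff (by simpa [IsFractionRing.to_map_eq_zero_iff] using hb)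
    (by simpa [IsFractionRing.to_map_eq_zero_iff] using he), ← map_mul, ← map_mul, h]

theorem sum_well_defined_general {d : ℕ} (f : (Fin d → ℤ) → ℚ)
    (D D' P P' : AddMonoidAlgebra ℚ (Fin d → ℤ))
    (hP : ∀ x, P.coeff x = conv D f x) (hP' : ∀ x, P'.coeff x = conv D' f x) :
    P * D' = P' * D ∧
      (D ≠ 0 → D' ≠ 0 →
        (algebraMap (AddMonoidAlgebra ℚ (Fin d → ℤ))
              (FractionRing (AddMonoidAlgebra ℚ (Fin d → ℤ))) P) /
            (algebraMap (AddMonoidAlgebra ℚ (Fin d → ℤ))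
              (FractionRing (AddMonoidAlgebra ℚ (Fin d → ℤ))) D) =
          (algebraMap (AddMonoidAlgebra ℚ (Fin d → ℤ))
              (FractionRing (AddMonoidAlgebra ℚ (Fin d → ℤ))) P') /
            (algebraMap (AddMonoidAlgebra ℚ (Fin d → ℤ))
              (FractionRing (AddMonoidAlgebra ℚ (Fin d → ℤ))) D')) := by
  have key : P * D' = P' * D := by
    rw [← AddMonoidAlgebra.coeff_inj, ← DFunLike.coe_fn_eq, coeff_mul_eq_conv, coeff_mul_eq_conv, funext hP, funext hP',
      conv_comm]
  exact ⟨key, fun hD hD' => IsFractionRing.div_eq_div_of_mul_eq_mul hD hD' key⟩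

/-- The Brion–Vergne sum is well defined: if `D ⋆ f` and `D' ⋆ f` are both finitely
supported, given by `P, P' ∈ ℚ[ℤ^d]`, then `P · D' = P' · D`, and hence
`P/D = P'/D'` in the fraction field when `D, D' ≠ 0`. -/
theorem sum_well_defined {d : ℕ} (hd : 1 ≤ d) (f : (Fin d → ℤ) → ℚ)
    (D D' P P' : AddMonoidAlgebra ℚ (Fin d → ℤ))
    (hP : ∀ x, P.coeff x = conv D f x) (hP' : ∀ x, P'.coeff x = conv D' f x) :
    P * D' = P' * D ∧
      (D ≠ 0 → D' ≠ 0 →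
        (algebraMap (AddMonoidAlgebra ℚ (Fin d → ℤ))
              (FractionRing (AddMonoidAlgebra ℚ (Fin d → ℤ))) P) /
            (algebraMap (AddMonoidAlgebra ℚ (Fin d → ℤ))
              (FractionRing (AddMonoidAlgebra ℚ (Fin d → ℤ))) D) =
          (algebraMap (AddMonoidAlgebra ℚ (Fin d → ℤ))
              (FractionRing (AddMonoidAlgebra ℚ (Fin d → ℤ))) P') /
            (algebraMap (AddMonoidAlgebra ℚ (Fin d → ℤ))
              (FractionRing (AddMonoidAlgebra ℚ (Fin d → ℤ))) D')) :=
  sum_well_defined_general f D D' P P' hP hP'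
end

section
/- Let d ≥ 1 and let v_1, …, v_r ∈ ℤ^d be linearly independent over ℚ. Let C = {t_1 v_1 + … + t_r v_r : t_i ∈ ℚ, t_i ≥ 0} ⊆ ℚ^d be the simplicial cone they generate, and let Π = {t_1 v_1 + … + t_r v_r : t_i ∈ ℚ, 0 ≤ t_i < 1} be the half-open fundamental parallelepiped. Then (∏_{i=1}^r (1 − e^{v_i})) ⋆ 1_{C ∩ ℤ^d} = 1_{Π ∩ ℤ^d}. In particular this convolution is finitely supported, so 1_{C ∩ ℤ^d} is summable. -/
/-! Expanding the product gives
`(∏ (1 - e^{v_i})) ⋆ f (x) = Σ_{S ⊆ [r]} (-1)^{|S|} f (x - Σ_{i ∈ S} v_i)`.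
If `x = Σ t_i v_i` with `t_i ≥ 0` (the `t_i` are unique by linear independence), then
`x - Σ_{i ∈ S} v_i` lies in the cone exactly when `t_i ≥ 1` for all `i ∈ S`; so for
`f = 1_C` the alternating sum runs over the subsets of `T = {i | t_i ≥ 1}` and equals `1`
iff `T = ∅`, i.e. iff `x ∈ Π`. If `x ∉ C`, no `x - Σ_{i ∈ S} v_i` lies in `C` either.
The lattice points of `Π` are finitely many since `Π` is bounded. -/

open Finset

section Convolution

variable {d : ℕ}

lemma conv_eq_linearCombination (D : AddMonoidAlgebra ℚ (Fin d → ℤ)) (f : (Fin d → ℤ) → ℚ)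
    (x : Fin d → ℤ) :
    conv D f x = Finsupp.linearCombination ℚ (fun m => f (x - m))
      (AddMonoidAlgebra.coeffLinearEquiv ℚ D) := by
  rw [Finsupp.linearCombination_apply]
  rfl

lemma conv_sum {ι : Type*} (s : Finset ι) (D : ι → AddMonoidAlgebra ℚ (Fin d → ℤ))
    (f : (Fin d → ℤ) → ℚ) (x : Fin d → ℤ) :
    conv (∑ i ∈ s, D i) f x = ∑ i ∈ s, conv (D i) f x := by
  simp only [conv_eq_linearCombination, map_sum]

lemma conv_smul (c : ℚ) (D : AddMonoidAlgebra ℚ (Fin d → ℤ)) (f : (Fin d → ℤ) → ℚ)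
    (x : Fin d → ℤ) : conv (c • D) f x = c * conv D f x := by
  simp only [conv_eq_linearCombination, map_smul, smul_eq_mul]

lemma conv_expn (m : Fin d → ℤ) (f : (Fin d → ℤ) → ℚ) (x : Fin d → ℤ) :
    conv (expn m) f x = f (x - m) := by
  simp [conv_eq_linearCombination, expn, AddMonoidAlgebra.coeffLinearEquiv]

lemma prod_one_sub_expn {ι : Type*} [DecidableEq ι] (s : Finset ι) (v : ι → Fin d → ℤ) :
    ∏ i ∈ s, (1 - expn (v i)) = ∑ t ∈ s.powerset, (-1 : ℚ) ^ #t • expn (∑ i ∈ t, v i) := by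
  rw [prod_sub]
  refine sum_congr rfl fun t _ => ?_
  simp only [prod_const_one, mul_one, expn, AddMonoidAlgebra.prod_single,
    AddMonoidAlgebra.smul_single]
  rw [← AddMonoidAlgebra.smul_single, Algebra.smul_def, map_pow, map_neg, map_one]

lemma conv_prod_one_sub_expn {ι : Type*} [DecidableEq ι] (s : Finset ι) (v : ι → Fin d → ℤ)
    (f : (Fin d → ℤ) → ℚ) (x : Fin d → ℤ) :
    conv (∏ i ∈ s, (1 - expn (v i))) f x =
      ∑ t ∈ s.powerset, (-1 : ℚ) ^ #t * f (x - ∑ i ∈ t, v i) := by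
  simp only [prod_one_sub_expn, conv_sum, conv_smul, conv_expn]

end Convolution

section SimplicialCone

variable (K : Type*) {M ι : Type*} [Ring K] [PartialOrder K] [AddCommGroup M] [Module K M]
  [Fintype ι]

def simplicialCone (V : ι → M) : Set M :=
  {x | ∃ t : ι → K, (∀ i, 0 ≤ t i) ∧ x = ∑ i, t i • V i}

def halfOpenParallelepiped (V : ι → M) : Set M :=
  {x | ∃ t : ι → K, (∀ i, 0 ≤ t i ∧ t i < 1) ∧ x = ∑ i, t i • V i}

variable {K}

lemma halfOpenParallelepiped_subset_simplicialCone (V : ι → M) :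
    halfOpenParallelepiped K V ⊆ simplicialCone K V :=
  fun _ ⟨t, ht, hx⟩ => ⟨t, fun i => (ht i).1, hx⟩

variable [IsOrderedRing K]

lemma sub_sum_mem_simplicialCone_iff [DecidableEq ι] (V : ι → M) (y : M) (S : Finset ι) :
    y - ∑ i ∈ S, V i ∈ simplicialCone K V ↔
      ∃ t : ι → K, (∀ i, 0 ≤ t i) ∧ (∀ i ∈ S, 1 ≤ t i) ∧ y = ∑ i, t i • V i := by
  have shift : ∀ s : ι → K,
      ∑ i, (s i + if i ∈ S then 1 else 0) • V i = ∑ i, s i • V i + ∑ i ∈ S, V i := by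
    intro s
    simp only [add_smul, sum_add_distrib, ite_smul, one_smul, zero_smul, sum_ite_mem, univ_inter]
  constructor
  · rintro ⟨s, hs, hy⟩
    refine ⟨fun i => s i + if i ∈ S then 1 else 0, fun i => ?_, fun i hi => ?_, ?_⟩
    · exact add_nonneg (hs i) (by split_ifs <;> simp)
    · simpa [hi] using hs i
    · rw [shift, ← hy, sub_add_cancel]
  · rintro ⟨t, ht0, ht1, rfl⟩
    refine ⟨fun i => t i - if i ∈ S then 1 else 0, fun i => ?_, ?_⟩
    · dsimp only
      split_ifs with hi
      · exact sub_nonneg.2 (ht1 i hi)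
      · simpa using ht0 i
    · simpa using (eq_sub_of_add_eq (shift fun i => t i - if i ∈ S then 1 else 0).symm).symm

end SimplicialCone

namespace LinearIndependent

variable {M ι : Type*} [AddCommGroup M] [Fintype ι]

lemma sum_smul_sub_sum_mem_simplicialCone_iff {K : Type*} [Ring K] [PartialOrder K]
    [IsOrderedRing K] [Module K M] [DecidableEq ι] {V : ι → M} (hV : LinearIndependent K V)
    (t : ι → K) (S : Finset ι) :
    ∑ i, t i • V i - ∑ i ∈ S, V i ∈ simplicialCone K V ↔
      (∀ i, 0 ≤ t i) ∧ ∀ i ∈ S, 1 ≤ t i := by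
  rw [sub_sum_mem_simplicialCone_iff]
  constructor
  · rintro ⟨s, hs0, hs1, hst⟩
    obtain rfl : t = s := funext (Fintype.linearIndependent_iffₛ.1 hV t s hst)
    exact ⟨hs0, hs1⟩
  · rintro ⟨ht0, ht1⟩
    exact ⟨t, ht0, ht1, rfl⟩

lemma sum_smul_mem_halfOpenParallelepiped_iff {K : Type*} [Ring K] [PartialOrder K]
    [Module K M] {V : ι → M} (hV : LinearIndependent K V) (t : ι → K) :
    ∑ i, t i • V i ∈ halfOpenParallelepiped K V ↔ ∀ i, 0 ≤ t i ∧ t i < 1 := by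
  constructor
  · rintro ⟨s, hs, hst⟩
    obtain rfl : t = s := funext (Fintype.linearIndependent_iffₛ.1 hV t s hst)
    exact hs
  · exact fun ht => ⟨t, ht, rfl⟩

theorem sum_powerset_neg_one_pow_mul_indicator {K : Type*} [Ring K] [LinearOrder K]
    [IsOrderedRing K] [Module K M] [DecidableEq ι] {R : Type*} [Ring R] {V : ι → M}
    (hV : LinearIndependent K V) (y : M) :
    ∑ S ∈ (univ : Finset ι).powerset,
        (-1 : R) ^ #S * (simplicialCone K V).indicator 1 (y - ∑ i ∈ S, V i) =
      (halfOpenParallelepiped K V).indicator 1 y := by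
  classical
  by_cases hy : y ∈ simplicialCone K V
  · obtain ⟨t, ht0, rfl⟩ := hy
    set T : Finset ι := {i | 1 ≤ t i}
    have term (S : Finset ι) :
        (-1 : R) ^ #S * (simplicialCone K V).indicator 1 (∑ i, t i • V i - ∑ i ∈ S, V i) =
          if S ⊆ T then (-1) ^ #S else 0 := by
      simp [Set.indicator_apply, hV.sum_smul_sub_sum_mem_simplicialCone_iff, ht0, subset_iff, T]
    have alternating : ∑ S ∈ T.powerset, (-1 : R) ^ #S = if T = ∅ then 1 else 0 := by
      simpa using congrArg (Int.cast : ℤ → R) (sum_powerset_neg_one_pow_card (x := T))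
    rw [sum_congr rfl fun S _ => term S, ← sum_filter,
      show {S ∈ (univ : Finset ι).powerset | S ⊆ T} = T.powerset by ext; simp, alternating]
    have empty_iff : T = ∅ ↔ ∀ i, 0 ≤ t i ∧ t i < 1 := by
      simp [T, filter_eq_empty_iff, ht0]
    simp only [Set.indicator_apply, hV.sum_smul_mem_halfOpenParallelepiped_iff, empty_iff,
      Pi.one_apply]
  · have shifted_notMem (S : Finset ι) : y - ∑ i ∈ S, V i ∉ simplicialCone K V := fun h =>
      hy <| by
        obtain ⟨t, ht0, -, rfl⟩ := (sub_sum_mem_simplicialCone_iff V y S).1 h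
        exact ⟨t, ht0, rfl⟩
    have hy' : y ∉ halfOpenParallelepiped K V := fun h =>
      hy (halfOpenParallelepiped_subset_simplicialCone V h)
    simp [Set.indicator_of_notMem (shifted_notMem _), Set.indicator_of_notMem hy']

theorem sum_powerset_neg_one_pow_mul_indicator_preimage {K N R : Type*} [Ring K]
    [LinearOrder K] [IsOrderedRing K] [Module K M] [AddCommGroup N] [DecidableEq ι] [Ring R]
    (φ : N →+ M) {v : ι → N}
    (hv : LinearIndependent K (φ ∘ v)) (y : N) :
    ∑ S ∈ (univ : Finset ι).powerset,
        (-1 : R) ^ #S * (φ ⁻¹' simplicialCone K (φ ∘ v)).indicator 1 (y - ∑ i ∈ S, v i) =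
      (φ ⁻¹' halfOpenParallelepiped K (φ ∘ v)).indicator 1 y := by
  have pull (s : Set M) (z : N) : (φ ⁻¹' s).indicator (1 : N → R) z = s.indicator 1 (φ z) :=
    Set.indicator_comp_right (g := 1) φ
  simp only [pull, map_sub, map_sum]
  exact hv.sum_powerset_neg_one_pow_mul_indicator (φ y)

end LinearIndependent

lemma abs_apply_le_of_mem_halfOpenParallelepiped {K ι κ : Type*} [Ring K] [LinearOrder K]
    [IsOrderedRing K] [Fintype ι] {V : ι → κ → K} {x : κ → K}
    (hx : x ∈ halfOpenParallelepiped K V) (j : κ) : |x j| ≤ ∑ i, |V i j| := by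
  obtain ⟨t, ht, rfl⟩ := hx
  calc |(∑ i, t i • V i) j| = |∑ i, t i * V i j| := by simp
    _ ≤ ∑ i, |t i * V i j| := abs_sum_le_sum_abs _ _
    _ ≤ ∑ i, |V i j| := sum_le_sum fun i _ => by
        rw [abs_mul]
        exact mul_le_of_le_one_left (abs_nonneg _)
          ((abs_of_nonneg (ht i).1).trans_le (ht i).2.le)

lemma finite_setOf_intCast_mem_halfOpenParallelepiped {K ι κ : Type*} [Ring K] [LinearOrder K]
    [IsStrictOrderedRing K] [FloorRing K] [Fintype ι] [Finite κ] (V : ι → κ → K) :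
    {x : κ → ℤ | (fun j => (x j : K)) ∈ halfOpenParallelepiped K V}.Finite := by
  let B : κ → ℤ := fun j => ⌈∑ i, |V i j|⌉
  refine (Set.Finite.pi fun j => Set.finite_Icc (-B j) (B j)).subset fun x hx j _ => ?_
  have bound : |(x j : K)| ≤ B j :=
    (abs_apply_le_of_mem_halfOpenParallelepiped hx j).trans (Int.le_ceil _)
  exact abs_le.1 (by exact_mod_cast bound)

theorem simplicial_cone_convolution_general {d : ℕ} (r : ℕ) (v : Fin r → (Fin d → ℤ))
    (hv : LinearIndependent ℚ (fun i => (fun j => ((v i j : ℚ)))))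
    (C Par : Set (Fin d → ℚ))
    (hC : C = {x : Fin d → ℚ | ∃ t : Fin r → ℚ,
      (∀ i, 0 ≤ t i) ∧ x = ∑ i, t i • (fun j => ((v i j : ℚ)))})
    (hPar : Par = {x : Fin d → ℚ | ∃ t : Fin r → ℚ,
      (∀ i, 0 ≤ t i ∧ t i < 1) ∧ x = ∑ i, t i • (fun j => ((v i j : ℚ)))}) :
    conv (∏ i, (1 - expn (v i)))
        (Set.indicator {x : Fin d → ℤ | (fun j => ((x j : ℚ))) ∈ C} 1) =
      Set.indicator {x : Fin d → ℤ | (fun j => ((x j : ℚ))) ∈ Par} 1 ∧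
    (Function.support (conv (∏ i, (1 - expn (v i)))
        (Set.indicator {x : Fin d → ℤ | (fun j => ((x j : ℚ))) ∈ C} 1))).Finite ∧
    (∃ (r' : ℕ) (m : Fin r' → (Fin d → ℤ)), (∀ i, m i ≠ 0) ∧
      (Function.support (conv (∏ i, (1 - expn (m i)))
        (Set.indicator {x : Fin d → ℤ | (fun j => ((x j : ℚ))) ∈ C} 1))).Finite) := by
  have convolution : conv (∏ i, (1 - expn (v i)))
      (Set.indicator {x : Fin d → ℤ | (fun j => ((x j : ℚ))) ∈ C} 1) =
      Set.indicator {x : Fin d → ℤ | (fun j => ((x j : ℚ))) ∈ Par} 1 := by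
    subst hC hPar
    funext x
    rw [conv_prod_one_sub_expn]
    exact hv.sum_powerset_neg_one_pow_mul_indicator_preimage
      ((Int.castAddHom ℚ).compLeft (Fin d)) x
  have finite_support : (Function.support (conv (∏ i, (1 - expn (v i)))
      (Set.indicator {x : Fin d → ℤ | (fun j => ((x j : ℚ))) ∈ C} 1))).Finite := by
    rw [convolution, hPar]
    exact (finite_setOf_intCast_mem_halfOpenParallelepiped _).subset Set.support_indicator_subset
  refine ⟨convolution, finite_support, r, v, fun i hi => hv.ne_zero i ?_, finite_support⟩
  funext j
  simp [hi]

/-- For `v_1, …, v_r ∈ ℤ^d` linearly independent over `ℚ`, generating the simplicial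
cone `C` with half-open fundamental parallelepiped `Par`, one has
`(∏ (1 - e^{v_i})) ⋆ 1_{C ∩ ℤ^d} = 1_{Par ∩ ℤ^d}`; in particular this convolution is
finitely supported, so `1_{C ∩ ℤ^d}` is summable. -/
theorem simplicial_cone_convolution {d : ℕ} (hd : 1 ≤ d) (r : ℕ) (v : Fin r → (Fin d → ℤ))
    (hv : LinearIndependent ℚ (fun i => (fun j => ((v i j : ℚ)))))
    (C Par : Set (Fin d → ℚ))
    (hC : C = {x : Fin d → ℚ | ∃ t : Fin r → ℚ,
      (∀ i, 0 ≤ t i) ∧ x = ∑ i, t i • (fun j => ((v i j : ℚ)))})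
    (hPar : Par = {x : Fin d → ℚ | ∃ t : Fin r → ℚ,
      (∀ i, 0 ≤ t i ∧ t i < 1) ∧ x = ∑ i, t i • (fun j => ((v i j : ℚ)))}) :
    conv (∏ i, (1 - expn (v i)))
        (Set.indicator {x : Fin d → ℤ | (fun j => ((x j : ℚ))) ∈ C} 1) =
      Set.indicator {x : Fin d → ℤ | (fun j => ((x j : ℚ))) ∈ Par} 1 ∧
    (Function.support (conv (∏ i, (1 - expn (v i)))
        (Set.indicator {x : Fin d → ℤ | (fun j => ((x j : ℚ))) ∈ C} 1))).Finite ∧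
    (∃ (r' : ℕ) (m : Fin r' → (Fin d → ℤ)), (∀ i, m i ≠ 0) ∧
      (Function.support (conv (∏ i, (1 - expn (m i)))
        (Set.indicator {x : Fin d → ℤ | (fun j => ((x j : ℚ))) ∈ C} 1))).Finite) :=
  simplicial_cone_convolution_general r v hv C Par hC hPar
end
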